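/- arXiv:math/0307027 — 2 statements merged into one kernel-verified Lean document; each statement's English description precedes it below -/
import Mathlib

section
/- Let K, n be natural numbers with n < 2^K. Then the coefficient of X^n in the formal power series (1 - X)⁻¹ · ∑_{k=0}^{K-1} X^{2^{k+1}} · (1 + X^{2^k})⁻¹ over ℤ equals e₀(n). -/
open PowerSeries

/-- The number of zeros in the binary representation of `n` (with `e₀ 0 = 0`). -/
def binaryZeros (n : ℕ) : ℕ := (Nat.digits 2 n).count 0

private lemma invOfUnit_eq_of_mul (f g : PowerSeries ℤ)
    (hc : PowerSeries.constantCoeff f = 1) (h : f * g = 1) :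
    PowerSeries.invOfUnit f 1 = g := by
  have h1 : f * PowerSeries.invOfUnit f 1 = 1 :=
    PowerSeries.mul_invOfUnit f 1 (by simp [hc])
  calc PowerSeries.invOfUnit f 1 = PowerSeries.invOfUnit f 1 * (f * g) := by rw [h, mul_one]
    _ = (f * PowerSeries.invOfUnit f 1) * g := by ring
    _ = g := by rw [h1, one_mul]

private lemma invA :
    PowerSeries.invOfUnit (1 - (PowerSeries.X : PowerSeries ℤ)) 1 =
      PowerSeries.mk (fun _ => (1 : ℤ)) := by
  apply invOfUnit_eq_of_mul
  · simp
  · ext n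
    rw [sub_mul, one_mul, map_sub]
    rcases n with _ | n
    · simp [PowerSeries.coeff_mk]
    · have : (PowerSeries.X : PowerSeries ℤ) = X ^ 1 := (pow_one _).symm
      rw [this, PowerSeries.coeff_X_pow_mul']
      simp [PowerSeries.coeff_mk, Nat.succ_le_succ]

private def Hser (m : ℕ) : PowerSeries ℤ :=
  PowerSeries.mk (fun j => if m ∣ j then (-1 : ℤ) ^ (j / m) else 0)

private lemma invB (m : ℕ) (hm : 0 < m) :
    PowerSeries.invOfUnit (1 + (PowerSeries.X : PowerSeries ℤ) ^ m) 1 = Hser m := by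
  apply invOfUnit_eq_of_mul
  · simp [hm.ne']
  · ext n
    rw [add_mul, one_mul, map_add, PowerSeries.coeff_X_pow_mul']
    rcases Nat.eq_zero_or_pos n with rfl | hn
    · simp [Hser, PowerSeries.coeff_mk, hm.ne']
    · have h1 : (PowerSeries.coeff (R := ℤ) n) 1 = 0 := by
        simp [PowerSeries.coeff_one, hn.ne']
      rw [h1]
      simp only [Hser, PowerSeries.coeff_mk]
      by_cases hle : m ≤ n
      · rw [if_pos hle]
        by_cases hd : m ∣ n
        · obtain ⟨q, rfl⟩ := hd
          have hq : 1 ≤ q := by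
            cases q with
            | zero => simp at hn
            | succ r => omega
          have hd2 : m ∣ m * q - m := ⟨q - 1, by rw [Nat.mul_sub_one, Nat.mul_comm]⟩
          rw [if_pos ⟨q, rfl⟩, if_pos hd2]
          have e1 : m * q / m = q := Nat.mul_div_cancel_left q hm
          have e2 : (m * q - m) / m = q - 1 := by
            rw [show m * q - m = m * (q - 1) by rw [Nat.mul_sub_one, Nat.mul_comm],
              Nat.mul_div_cancel_left _ hm]
          rw [e1, e2]
          obtain ⟨r, rfl⟩ := Nat.exists_eq_add_of_le hq
          have hr : (1 : ℕ) + r - 1 = r := by omega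
          rw [hr, pow_add]
          ring
        · have hd2 : ¬ m ∣ n - m := fun h => hd (by
            have := Nat.dvd_add h (dvd_refl m)
            rwa [Nat.sub_add_cancel hle] at this)
          rw [if_neg hd, if_neg hd2, add_zero]
      · rw [if_neg hle, if_neg (fun hd => hle (Nat.le_of_dvd hn hd)), add_zero]

private lemma geomInnerSum (m : ℕ) (hm : 0 < m) (n : ℕ) :
    (∑ q ∈ Finset.range (n + 1),
        (if 2 * m ≤ q then (if m ∣ q - 2 * m then (-1 : ℤ) ^ ((q - 2 * m) / m) else 0) else 0))
      = if 2 * m ≤ n ∧ n / m % 2 = 0 then 1 else 0 := by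
  induction n with
  | zero =>
    have h0 : ¬ 2 * m ≤ 0 := by omega
    simp [h0]
  | succ n ih =>
    rw [Finset.sum_range_succ, ih]
    by_cases hle : 2 * m ≤ n + 1
    · by_cases hd : m ∣ n + 1
      · obtain ⟨q, hq⟩ := hd
        have hq2 : 2 ≤ q := by
          rcases Nat.lt_or_ge q 2 with h | h
          · interval_cases q <;> omega
          · exact h
        obtain ⟨r, rfl⟩ : ∃ r, q = r + 2 := ⟨q - 2, by omega⟩
        have hq' : n + 1 = 2 * m + m * r := by rw [hq]; ring
        have hdd : m ∣ n + 1 - 2 * m := ⟨r, by omega⟩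
        have hqd : (n + 1) / m = r + 2 := by rw [hq, Nat.mul_div_cancel_left _ hm]
        have er1 : m * (r + 1) = m * r + m := by ring
        have er2 : m * (r + 2) = m * r + 2 * m := by ring
        have hnd : n / m = r + 1 := by
          apply Nat.div_eq_of_lt_le
          · calc (r + 1) * m = m * r + m := by ring
              _ ≤ n := by omega
          · calc n < m * r + 2 * m := by omega
              _ = (r + 1 + 1) * m := by ring
        have hed : (n + 1 - 2 * m) / m = r := by
          rw [show n + 1 - 2 * m = m * r by omega, Nat.mul_div_cancel_left _ hm]
        rw [if_pos hle, if_pos hdd, hed, hqd, hnd]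
        rcases Nat.even_or_odd r with hr | hr
        · have h1 : r % 2 = 0 := Nat.even_iff.mp hr
          have e1 : (r + 1) % 2 = 1 := by omega
          have e2 : (r + 2) % 2 = 0 := by omega
          rw [if_neg (by omega), if_pos ⟨hle, e2⟩, hr.neg_one_pow]
          norm_num
        · have h1 : r % 2 = 1 := Nat.odd_iff.mp hr
          have e1 : (r + 1) % 2 = 0 := by omega
          have e2 : (r + 2) % 2 = 1 := by omega
          have hmr : 1 ≤ m * r := Nat.mul_pos hm (by omega)
          have hge : 2 * m ≤ n := by omega
          rw [if_pos ⟨hge, e1⟩, if_neg (by omega), hr.neg_one_pow]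
          ring
      · have hd2 : ¬ m ∣ n + 1 - 2 * m := by
          intro h
          apply hd
          have h2 := Nat.dvd_add (dvd_mul_left m 2) h
          rwa [Nat.add_sub_cancel' hle] at h2
        have hne : 2 * m ≠ n + 1 := fun h => hd (h ▸ dvd_mul_left m 2)
        have hle2 : 2 * m ≤ n := by omega
        have hqd : (n + 1) / m = n / m := by
          rw [Nat.succ_div, if_neg hd, add_zero]
        rw [if_pos hle, if_neg hd2, add_zero, hqd]
        simp [hle, hle2]
    · have hle2 : ¬ 2 * m ≤ n := by omega
      simp [hle, hle2]

private lemma final_sum (K n : ℕ) (h2 : n < 2 ^ K) :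
    (∑ k ∈ Finset.range K,
        (if 2 * 2 ^ k ≤ n ∧ n / 2 ^ k % 2 = 0 then (1 : ℤ) else 0))
      = (binaryZeros n : ℤ) := by
  induction K generalizing n with
  | zero =>
    interval_cases n
    simp [binaryZeros]
  | succ K ih =>
    rcases Nat.lt_or_ge n 2 with hn | hn
    · have hz : ∀ k ∈ Finset.range (K + 1),
          (if 2 * 2 ^ k ≤ n ∧ n / 2 ^ k % 2 = 0 then (1 : ℤ) else 0) = 0 := by
        intro k _
        have : ¬ 2 * 2 ^ k ≤ n := by
          have : 1 ≤ 2 ^ k := Nat.one_le_two_pow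
          omega
        simp [this]
      rw [Finset.sum_eq_zero hz]
      interval_cases n <;> simp [binaryZeros]
    · rw [Finset.sum_range_succ']
      have hstep : ∀ k, (if 2 * 2 ^ (k + 1) ≤ n ∧ n / 2 ^ (k + 1) % 2 = 0 then (1 : ℤ) else 0)
          = (if 2 * 2 ^ k ≤ n / 2 ∧ (n / 2) / 2 ^ k % 2 = 0 then (1 : ℤ) else 0) := by
        intro k
        have e1 : n / 2 ^ (k + 1) = (n / 2) / 2 ^ k := by
          rw [Nat.div_div_eq_div_mul, pow_succ, mul_comm (2 ^ k) 2]
        have e2 : (2 * 2 ^ (k + 1) ≤ n) ↔ (2 * 2 ^ k ≤ n / 2) := by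
          rw [Nat.le_div_iff_mul_le (by norm_num)]
          constructor <;> intro h <;> [omega; (rw [pow_succ]; omega)]
        rw [e1]
        by_cases h : 2 * 2 ^ k ≤ n / 2 ∧ (n / 2) / 2 ^ k % 2 = 0
        · rw [if_pos ⟨e2.mpr h.1, h.2⟩, if_pos h]
        · rw [if_neg (fun hc => h ⟨e2.mp hc.1, hc.2⟩), if_neg h]
      rw [Finset.sum_congr rfl (fun k _ => hstep k)]
      have hdiv : n / 2 < 2 ^ K := by
        rw [Nat.div_lt_iff_lt_mul (by norm_num)]
        rw [pow_succ] at h2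
        omega
      rw [ih _ hdiv]
      have h0 : (if 2 * 2 ^ 0 ≤ n ∧ n / 2 ^ 0 % 2 = 0 then (1 : ℤ) else 0)
          = (if n % 2 = 0 then (1 : ℤ) else 0) := by
        simp only [pow_zero, mul_one, Nat.div_one]
        by_cases h : n % 2 = 0
        · rw [if_pos ⟨hn, h⟩, if_pos h]
        · rw [if_neg (fun hc => h hc.2), if_neg h]
      rw [h0]
      have hdig : Nat.digits 2 n = n % 2 :: Nat.digits 2 (n / 2) :=
        Nat.digits_def' (by norm_num) (by omega)
      have : binaryZeros n = binaryZeros (n / 2) + (if n % 2 = 0 then 1 else 0) := by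
        unfold binaryZeros
        rw [hdig, List.count_cons]
        congr 1
        by_cases h : n % 2 = 0 <;> simp [h, beq_iff_eq]
      rw [this]
      push_cast
      by_cases h : n % 2 = 0 <;> simp [h]

/-- For `n < 2^K`, the coefficient of `X^n` in
`(1 - X)⁻¹ · ∑_{k=0}^{K-1} X^(2^(k+1)) · (1 + X^(2^k))⁻¹` over `ℤ` equals `e₀ n`,
where the formal inverses are `invOfUnit _ 1`. -/
theorem stmt_9 (K n : ℕ) (h2 : n < 2 ^ K) :
    PowerSeries.coeff (R := ℤ) n
      (PowerSeries.invOfUnit (1 - (PowerSeries.X : PowerSeries ℤ)) 1 *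
        ∑ k ∈ Finset.range K,
          (PowerSeries.X : PowerSeries ℤ) ^ (2 ^ (k + 1)) *
            PowerSeries.invOfUnit (1 + (PowerSeries.X : PowerSeries ℤ) ^ (2 ^ k)) 1)
    = (binaryZeros n : ℤ) := by
  rw [invA]
  have hB : ∀ k, PowerSeries.invOfUnit (1 + (PowerSeries.X : PowerSeries ℤ) ^ (2 ^ k)) 1
      = Hser (2 ^ k) := fun k => invB _ (Nat.two_pow_pos _)
  simp only [hB]
  set S : PowerSeries ℤ := ∑ k ∈ Finset.range K,
    (PowerSeries.X : PowerSeries ℤ) ^ (2 ^ (k + 1)) * Hser (2 ^ k) with hS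
  rw [PowerSeries.coeff_mul]
  rw [Finset.Nat.sum_antidiagonal_eq_sum_range_succ (fun p q =>
    (PowerSeries.coeff (R := ℤ) p) (PowerSeries.mk fun _ => (1:ℤ)) * (PowerSeries.coeff (R := ℤ) q) S)]
  simp only [PowerSeries.coeff_mk, one_mul]
  have hcoeffS : ∀ q, PowerSeries.coeff (R := ℤ) q S
      = ∑ k ∈ Finset.range K,
          (if 2 * 2 ^ k ≤ q then
            (if 2 ^ k ∣ q - 2 * 2 ^ k then (-1 : ℤ) ^ ((q - 2 * 2 ^ k) / 2 ^ k) else 0) else 0) := by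
    intro q
    rw [hS, map_sum]
    refine Finset.sum_congr rfl (fun k _ => ?_)
    rw [PowerSeries.coeff_X_pow_mul']
    have he : 2 ^ (k + 1) = 2 * 2 ^ k := by ring
    rw [he]
    by_cases h : 2 * 2 ^ k ≤ q
    · rw [if_pos h, if_pos h]
      simp [Hser, PowerSeries.coeff_mk]
    · rw [if_neg h, if_neg h]
  have hsum : (∑ q ∈ Finset.range (n + 1), PowerSeries.coeff (R := ℤ) (n - q) S)
      = ∑ q ∈ Finset.range (n + 1), PowerSeries.coeff (R := ℤ) q S := by
    exact Finset.sum_range_reflect (fun q => PowerSeries.coeff (R := ℤ) q S) (n + 1)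
  rw [hsum]
  simp only [hcoeffS]
  rw [Finset.sum_comm]
  rw [Finset.sum_congr rfl (fun k _ => geomInnerSum (2 ^ k) (Nat.two_pow_pos _) n)]
  exact final_sum K n h2
end

section
/- Let T be the formal power series over ℤ whose n-th coefficient is (-1)^{e₁(n)} (the Thue–Morse sequence on {1, -1}), and let T₂ be the formal power series whose n-th coefficient is (-1)^{e₁(n/2)} if n is even and 0 if n is odd (so T₂ represents T(X²)). Then (1 - X)·T₂ = T. -/
/-- The number of ones in the binary representation of `n` (with `e₁ 0 = 0`). -/
def binaryOnes (n : ℕ) : ℕ := (Nat.digits 2 n).count 1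

lemma binaryOnes_two_mul (m : ℕ) : binaryOnes (2 * m) = binaryOnes m := by
  rcases Nat.eq_zero_or_pos m with h | h
  · simp [h]
  · unfold binaryOnes
    rw [Nat.digits_def' (by norm_num : 1 < 2) (by omega)]
    simp [Nat.mul_div_cancel_left _ (by norm_num : 0 < 2), Nat.mul_mod_right]

lemma binaryOnes_two_mul_add_one (m : ℕ) : binaryOnes (2 * m + 1) = binaryOnes m + 1 := by
  unfold binaryOnes
  rw [Nat.digits_def' (by norm_num : 1 < 2) (by omega)]
  have h1 : (2 * m + 1) % 2 = 1 := by omega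
  have h2 : (2 * m + 1) / 2 = m := by omega
  simp [h1, h2]

/-- Let `T` be the power series over `ℤ` with `n`-th coefficient
`(-1)^(e₁ n)` (the Thue–Morse sequence on `{1, -1}`), and let `T₂` be the power
series with `n`-th coefficient `(-1)^(e₁ (n/2))` if `n` is even and `0` otherwise
(so `T₂` represents `T(X²)`). Then `(1 - X)·T₂ = T`. -/
theorem stmt_12 :
    (1 - (PowerSeries.X : PowerSeries ℤ)) *
        PowerSeries.mk (fun n => if Even n then (-1 : ℤ) ^ binaryOnes (n / 2) else 0)
    = PowerSeries.mk (fun n => (-1 : ℤ) ^ binaryOnes n) := by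
  ext n
  rw [sub_mul, one_mul, map_sub]
  rcases n with _ | m
  · simp [binaryOnes]
  · rw [PowerSeries.coeff_succ_X_mul]
    simp only [PowerSeries.coeff_mk]
    rcases Nat.even_or_odd m with ⟨k, hk⟩ | ⟨k, hk⟩
    · -- m = 2k, so m+1 odd
      rw [hk, if_neg (show ¬ Even (k + k + 1) by simp [parity_simps]),
        if_pos (show Even (k + k) from ⟨k, rfl⟩),
        show (k + k) / 2 = k by omega, show k + k + 1 = 2 * k + 1 by omega,
        binaryOnes_two_mul_add_one, pow_succ]
      ring
    · -- m = 2k+1, m+1 = 2(k+1) even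
      have h1 : Even (m + 1) := ⟨k + 1, by omega⟩
      have h2 : ¬ Even m := by simp [hk, parity_simps]
      have h3 : (m + 1) / 2 = k + 1 := by omega
      simp [h1, h2, h3, show m + 1 = 2 * (k + 1) by omega, binaryOnes_two_mul]
end
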